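/- arXiv:1509.02664 — 3 statements merged into one kernel-verified Lean document; each statement's English description precedes it below -/
import Mathlib

section
/- Let R be an M×M Hermitian positive-definite complex matrix with smallest eigenvalue λ_min(R) and largest eigenvalue λ_max(R), let m > 0, and let μ be a real number satisfying max{0, (m − 1)/(m λ_min(R))} < μ < (m + 1)/(m λ_max(R)). Then every eigenvalue of the matrix m(I − μR) has absolute value strictly less than 1; that is, the spectral radius ρ(m(I − μR)) < 1. -/
open Matrix
open scoped ComplexOrder

/-- If `R` is an `M × M` Hermitian positive definite complex matrix with extreme eigenvalues
`λ_min(R)` and `λ_max(R)`, `m > 0`, and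
`max {0, (m-1)/(m λ_min(R))} < μ < (m+1)/(m λ_max(R))`,
then every eigenvalue of `m (I - μ R)` has absolute value strictly less than `1`,
i.e. the spectral radius of `m (I - μ R)` is less than `1`. -/
theorem ilms_mean_stability_single_node (M : ℕ) (hM : 0 < M)
    (R : Matrix (Fin M) (Fin M) ℂ) (hR : R.PosDef) (m μ : ℝ) (hm : 0 < m)
    (hlo : max 0 ((m - 1) / (m * (⨅ i, hR.isHermitian.eigenvalues i))) < μ)
    (hhi : μ < (m + 1) / (m * (⨆ i, hR.isHermitian.eigenvalues i))) :
    (∀ z ∈ spectrum ℂ ((m : ℂ) • ((1 : Matrix (Fin M) (Fin M) ℂ) - (μ : ℂ) • R)),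
      ‖z‖ < 1) ∧
    spectralRadius ℂ ((m : ℂ) • ((1 : Matrix (Fin M) (Fin M) ℂ) - (μ : ℂ) • R)) < 1 := by
  haveI : Nonempty (Fin M) := ⟨⟨0, hM⟩⟩
  set ev := hR.isHermitian.eigenvalues with hev
  have hpos : ∀ i, 0 < ev i := hR.eigenvalues_pos
  -- bounds on eigenvalues
  have hbddB : BddBelow (Set.range ev) := (Set.finite_range ev).bddBelow
  have hbddA : BddAbove (Set.range ev) := (Set.finite_range ev).bddAbove
  have hmin_le : ∀ i, (⨅ j, ev j) ≤ ev i := fun i => ciInf_le hbddB i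
  have hle_max : ∀ i, ev i ≤ (⨆ j, ev j) := fun i => le_ciSup hbddA i
  have hmin_pos : 0 < ⨅ j, ev j := by
    obtain ⟨i0, hi0⟩ := Finite.exists_min ev
    exact lt_of_lt_of_le (hpos i0) (le_ciInf hi0)
  have hmax_pos : 0 < ⨆ j, ev j :=
    lt_of_lt_of_le (hpos ⟨0, hM⟩) (hle_max ⟨0, hM⟩)
  have hμpos : 0 < μ := lt_of_le_of_lt (le_max_left _ _) hlo
  have h1 : m - 1 < μ * (m * (⨅ j, ev j)) :=
    (div_lt_iff₀ (by positivity)).mp (lt_of_le_of_lt (le_max_right _ _) hlo)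
  have h2 : μ * (m * (⨆ j, ev j)) < m + 1 :=
    (lt_div_iff₀ (by positivity)).mp hhi
  -- the matrix is unitarily equivalent to an explicit diagonal matrix
  have hU : (hR.isHermitian.eigenvectorUnitary : Matrix (Fin M) (Fin M) ℂ) *
      star (hR.isHermitian.eigenvectorUnitary : Matrix (Fin M) (Fin M) ℂ) = 1 :=
    (Matrix.mem_unitaryGroup_iff).mp hR.isHermitian.eigenvectorUnitary.2
  have hdiag : Matrix.diagonal (fun i => (m : ℂ) * (1 - (μ : ℂ) * (ev i : ℂ))) =
      (m : ℂ) • ((1 : Matrix (Fin M) (Fin M) ℂ) -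
        (μ : ℂ) • Matrix.diagonal (RCLike.ofReal ∘ ev)) := by
    ext i j
    by_cases h : i = j
    · subst h; simp [Matrix.one_apply]
    · simp [Matrix.diagonal_apply_ne _ h, Matrix.one_apply_ne h]
  have key : (m : ℂ) • ((1 : Matrix (Fin M) (Fin M) ℂ) - (μ : ℂ) • R) =
      (hR.isHermitian.eigenvectorUnitary : Matrix (Fin M) (Fin M) ℂ) *
        Matrix.diagonal (fun i => (m : ℂ) * (1 - (μ : ℂ) * (ev i : ℂ))) *
        star (hR.isHermitian.eigenvectorUnitary : Matrix (Fin M) (Fin M) ℂ) := by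
    rw [hdiag]
    conv_lhs => rw [hR.isHermitian.spectral_theorem]
    simp only [Matrix.mul_smul, Matrix.smul_mul, Matrix.mul_sub, Matrix.sub_mul,
      Matrix.mul_one, hU, Unitary.conjStarAlgAut_apply]
    rfl
  have hspec : spectrum ℂ ((m : ℂ) • ((1 : Matrix (Fin M) (Fin M) ℂ) - (μ : ℂ) • R)) =
      Set.range (fun i => (m : ℂ) * (1 - (μ : ℂ) * (ev i : ℂ))) := by
    rw [key, Unitary.spectrum_star_right_conjugate, spectrum_diagonal]
  have habs : ∀ i, ‖(m : ℂ) * (1 - (μ : ℂ) * (ev i : ℂ))‖ < 1 := by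
    intro i
    have : ((m : ℂ) * (1 - (μ : ℂ) * (ev i : ℂ))) = ((m * (1 - μ * ev i) : ℝ) : ℂ) := by
      push_cast; ring
    rw [this, Complex.norm_real, Real.norm_eq_abs, abs_lt]
    have hi1 := hmin_le i
    have hi2 := hle_max i
    have k1 := mul_le_mul_of_nonneg_left hi1 (by positivity : (0:ℝ) ≤ μ * m)
    have k2 := mul_le_mul_of_nonneg_left hi2 (by positivity : (0:ℝ) ≤ μ * m)
    constructor
    · nlinarith [hpos i]
    · nlinarith [hpos i]
  refine ⟨fun z hz => ?_, ?_⟩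
  · rw [hspec] at hz
    obtain ⟨i, rfl⟩ := hz
    exact habs i
  · rw [spectralRadius, hspec, iSup_range]
    obtain ⟨i0, hi0⟩ := Finite.exists_max
      (fun i => ‖(m : ℂ) * (1 - (μ : ℂ) * (ev i : ℂ))‖₊)
    refine lt_of_le_of_lt (iSup_le fun i => ?_)
      (show (‖(m : ℂ) * (1 - (μ : ℂ) * (ev i0 : ℂ))‖₊ : ENNReal) < 1 from ?_)
    · exact_mod_cast ENNReal.coe_le_coe.mpr (hi0 i)
    · rw [← ENNReal.coe_one, ENNReal.coe_lt_coe, ← NNReal.coe_lt_coe]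
      simpa [coe_nnnorm] using habs i0
end

section
/- Let N ≥ 1 and let F'_1, …, F'_N be M×M real matrices, g_1, …, g_N ∈ ℝ^M (row vectors), and L_1, …, L_N : ℝ^M → ℝ linear functionals, indices modulo N, satisfying L_k(σ) = L_{k−1}(F'_k σ) + g_k σ for all k and all σ ∈ ℝ^M. Fix k, define Π_{k,l} = F'_{k+l−1} F'_{k+l} ⋯ F'_{k−1} (ordered product modulo N, increasing indices left to right) and a_k = g_k Π_{k,2} + g_{k+1} Π_{k,3} + ⋯ + g_{k−2} Π_{k,N} + g_{k−1}, and suppose that I − Π_{k,1} is invertible. Then for every vector v ∈ ℝ^M, L_{k−1}(v) = a_k (I − Π_{k,1})^{−1} v. In particular, L_{k−1}(𝟙) = a_k (I − Π_{k,1})^{−1} 𝟙 (where 𝟙 is the all-ones vector) and L_{k−1}(λ_k) = a_k (I − Π_{k,1})^{−1} λ_k for any λ_k ∈ ℝ^M. -/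
open Matrix
open Fin.NatCast

/-- Closed-form conclusion of Proposition 4: under the spatial recursion
`L_k(σ) = L_{k-1}(F'_k σ) + g_k σ` (indices modulo `N`), with
`Π_{k,l} = F'_{k+l-1} F'_{k+l} ⋯ F'_{k-1}` and
`a_k = g_k Π_{k,2} + ⋯ + g_{k-2} Π_{k,N} + g_{k-1}`, if `I - Π_{k,1}` is invertible then
`L_{k-1}(v) = a_k (I - Π_{k,1})⁻¹ v` for every `v`; in particular
`L_{k-1}(𝟙) = a_k (I - Π_{k,1})⁻¹ 𝟙` (steady-state MSD) and
`L_{k-1}(λ_k) = a_k (I - Π_{k,1})⁻¹ λ_k` (steady-state EMSE). -/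
theorem ilms_steady_state_closed_form (M N : ℕ) [NeZero N]
    (F' : Fin N → Matrix (Fin M) (Fin M) ℝ)
    (g : Fin N → (Fin M → ℝ)) (L : Fin N → ((Fin M → ℝ) →ₗ[ℝ] ℝ))
    (hrec : ∀ (k : Fin N) (σ : Fin M → ℝ), L k σ = L (k - 1) (F' k *ᵥ σ) + g k ⬝ᵥ σ)
    (Pi : Fin N → ℕ → Matrix (Fin M) (Fin M) ℝ)
    (hPi : ∀ (k : Fin N) (l : ℕ),
      Pi k l = ((List.range (N - l + 1)).map fun j => F' (k + ((l - 1 + j : ℕ) : Fin N))).prod)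
    (a : Fin N → (Fin M → ℝ))
    (ha : ∀ k : Fin N,
      a k = (∑ l ∈ Finset.Icc 2 N, (g (k + ((l - 2 : ℕ) : Fin N))) ᵥ* Pi k l) + g (k - 1))
    (k : Fin N) (hinv : IsUnit ((1 : Matrix (Fin M) (Fin M) ℝ) - Pi k 1)) :
    (∀ v : Fin M → ℝ, L (k - 1) v = (a k ᵥ* ((1 : Matrix (Fin M) (Fin M) ℝ) - Pi k 1)⁻¹) ⬝ᵥ v) ∧
    L (k - 1) (fun _ => 1) =
      (a k ᵥ* ((1 : Matrix (Fin M) (Fin M) ℝ) - Pi k 1)⁻¹) ⬝ᵥ (fun _ => 1) ∧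
    ∀ lamk : Fin M → ℝ,
      L (k - 1) lamk = (a k ᵥ* ((1 : Matrix (Fin M) (Fin M) ℝ) - Pi k 1)⁻¹) ⬝ᵥ lamk := by
  have hN : 1 ≤ N := Nat.one_le_iff_ne_zero.2 (NeZero.ne N)
  -- P i = F'_{k-i} ⋯ F'_{k-1} (product of the last i matrices before index k)
  set P : ℕ → Matrix (Fin M) (Fin M) ℝ := fun i =>
    ((List.range i).map fun j => F' (k + ((N - i + j : ℕ) : Fin N))).prod with hPdef
  have hP0 : P 0 = 1 := by simp [hPdef]
  have hPsucc : ∀ m, m < N → P (m + 1) = F' (k - 1 - (m : Fin N)) * P m := by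
    intro m hm
    have hidx : k + ((N - (m + 1) + 0 : ℕ) : Fin N) = k - 1 - (m : Fin N) := by
      have h1 : ((N - (m + 1) + 0 : ℕ) : Fin N) = (N : Fin N) - ((m + 1 : ℕ) : Fin N) := by
        open Fin.CommRing in rw [Nat.add_zero, Nat.cast_sub (by omega)]
      rw [h1, Fin.natCast_self]
      push_cast
      open Fin.CommRing in ring
    simp only [hPdef, List.range_succ_eq_map, List.map_cons, List.prod_cons, List.map_map]
    rw [hidx]
    congr 1
    apply congrArg
    apply List.map_congr_left
    intro j hj
    show F' (k + ((N - (m + 1) + Nat.succ j : ℕ) : Fin N)) = F' (k + ((N - m + j : ℕ) : Fin N))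
    have hj2 : (N - (m + 1) + Nat.succ j : ℕ) = N - m + j := by omega
    rw [hj2]
  -- main induction: unwinding the recursion m times
  have main : ∀ m, m ≤ N → ∀ σ : Fin M → ℝ,
      L (k - 1) σ = L (k - 1 - (m : Fin N)) (P m *ᵥ σ)
        + ∑ i ∈ Finset.range m, g (k - 1 - (i : Fin N)) ⬝ᵥ (P i *ᵥ σ) := by
    intro m hm
    induction m with
    | zero => intro σ; simp [hP0]
    | succ n ih =>
      intro σ
      rw [ih (by omega) σ, hrec (k - 1 - (n : Fin N)) (P n *ᵥ σ), Finset.sum_range_succ]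
      have h1 : (k - 1 - (n : Fin N)) - 1 = k - 1 - (((n + 1 : ℕ)) : Fin N) := by
        push_cast; open Fin.CommRing in ring
      have h2 : F' (k - 1 - (n : Fin N)) *ᵥ (P n *ᵥ σ) = P (n + 1) *ᵥ σ := by
        rw [hPsucc n (by omega), ← Matrix.mulVec_mulVec]
      rw [h1, h2]
      ring
  -- the full round trip
  have hPN : P N = Pi k 1 := by
    rw [hPi k 1]
    simp only [hPdef]
    have h1 : N - 1 + 1 = N := by omega
    rw [h1]
    congr 1
    apply List.map_congr_left
    intro j hj
    have h2 : (N - N + j : ℕ) = 1 - 1 + j := by omega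
    rw [h2]
  have hsumdot : ∀ (s : Finset ℕ) (w : ℕ → Fin M → ℝ) (σ : Fin M → ℝ),
      (∑ l ∈ s, w l) ⬝ᵥ σ = ∑ l ∈ s, w l ⬝ᵥ σ := by
    intro s w σ
    simp only [dotProduct, Finset.sum_apply, Finset.sum_mul]
    rw [Finset.sum_comm]
  have key : ∀ σ : Fin M → ℝ, L (k - 1) σ = L (k - 1) (Pi k 1 *ᵥ σ) + a k ⬝ᵥ σ := by
    intro σ
    have h := main N le_rfl σ
    rw [Fin.natCast_self, sub_zero, hPN] at h
    rw [h]
    congr 1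
    -- sum identity
    rw [ha k, add_dotProduct, hsumdot]
    obtain ⟨n, rfl⟩ : ∃ n, N = n + 1 := ⟨N - 1, by omega⟩
    rw [Finset.sum_range_succ']
    congr 1
    · refine Finset.sum_bij' (fun i _ => n + 1 - i) (fun l _ => n + 1 - l) ?_ ?_ ?_ ?_ ?_
      · intro i hi
        simp only [Finset.mem_range] at hi
        simp only [Finset.mem_Icc]
        omega
      · intro l hl
        simp only [Finset.mem_Icc] at hl
        simp only [Finset.mem_range]
        omega
      · intro i hi
        simp only [Finset.mem_range] at hi
        show n + 1 - (n + 1 - i) = i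
        omega
      · intro l hl
        simp only [Finset.mem_Icc] at hl
        show n + 1 - (n + 1 - l) = l
        omega
      · intro i hi
        simp only [Finset.mem_range] at hi
        rw [Matrix.dotProduct_mulVec]
        have hg : k - 1 - ((i + 1 : ℕ) : Fin (n + 1))
            = k + ((n + 1 - i - 2 : ℕ) : Fin (n + 1)) := by
          have h2 : ((n + 1 - i - 2 : ℕ) : Fin (n + 1))
              = ((n + 1 : ℕ) : Fin (n + 1)) - ((i + 2 : ℕ) : Fin (n + 1)) := by
            open Fin.CommRing in rw [← Nat.cast_sub (by omega : i + 2 ≤ n + 1), Nat.sub_sub]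
          rw [h2, Fin.natCast_self]
          push_cast
          open Fin.CommRing in ring
        have hm : P (i + 1) = Pi k (n + 1 - i) := by
          rw [hPi k (n + 1 - i)]
          simp only [hPdef]
          have h3 : n + 1 - (n + 1 - i) + 1 = i + 1 := by omega
          rw [h3]
          simp only [Nat.sub_sub]
        rw [hg, hm]
    · simp [hP0]
  -- conclude via the inverse
  have hone : ((1 : Matrix (Fin M) (Fin M) ℝ) - Pi k 1)
      * ((1 : Matrix (Fin M) (Fin M) ℝ) - Pi k 1)⁻¹ = 1 :=
    Matrix.mul_nonsing_inv _ ((Matrix.isUnit_iff_isUnit_det _).1 hinv)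
  have final : ∀ v : Fin M → ℝ,
      L (k - 1) v = (a k ᵥ* ((1 : Matrix (Fin M) (Fin M) ℝ) - Pi k 1)⁻¹) ⬝ᵥ v := by
    intro v
    set σ := ((1 : Matrix (Fin M) (Fin M) ℝ) - Pi k 1)⁻¹ *ᵥ v with hσ
    have hveq : v = σ - Pi k 1 *ᵥ σ := by
      have h1 : ((1 : Matrix (Fin M) (Fin M) ℝ) - Pi k 1) *ᵥ σ = v := by
        rw [hσ, Matrix.mulVec_mulVec, hone, Matrix.one_mulVec]
      rw [← h1, Matrix.sub_mulVec, Matrix.one_mulVec]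
    calc L (k - 1) v = L (k - 1) (σ - Pi k 1 *ᵥ σ) := by rw [← hveq]
      _ = L (k - 1) σ - L (k - 1) (Pi k 1 *ᵥ σ) := map_sub _ _ _
      _ = a k ⬝ᵥ σ := by have := key σ; linarith
      _ = (a k ᵥ* ((1 : Matrix (Fin M) (Fin M) ℝ) - Pi k 1)⁻¹) ⬝ᵥ v :=
        Matrix.dotProduct_mulVec _ _ _
  exact ⟨final, final _, fun lamk => final lamk⟩
end

section
/- Let N ≥ 1, let μ > 0 and λ > 0 with 0 < 1 − 2μλ < 1, let W ≥ 0 and α_1, …, α_N ≥ 0, and for s ≥ 1 define ĝ_n(s) = α_n + s^N (s − 1)(1 − 2μλ) W for n = 1, …, N, and η(s) = ( 1/(1 − s^N (1 − 2μλ)^N) − 1 ) Σ_{n=1}^N ĝ_n(s) + ĝ_m(s) for a fixed index m. Then η is a non-decreasing function of s on the set { s ≥ 1 : s (1 − 2μλ) < 1 }. -/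
/-- Monotonicity of the steady-state MSD in the channel gain second moment
(Section III-C): with `0 < 1 - 2μλ < 1`, `W ≥ 0`, `α_n ≥ 0`, and
`ĝ_n(s) = α_n + s^N (s - 1)(1 - 2μλ) W`, the function
`η(s) = (1/(1 - s^N (1 - 2μλ)^N) - 1) Σ_n ĝ_n(s) + ĝ_m(s)` is non-decreasing on
`{s ≥ 1 : s (1 - 2μλ) < 1}`. -/
theorem ilms_msd_nondecreasing_in_channel_moment
    (N : ℕ) (hN : 1 ≤ N) (μ lam : ℝ) (hμ : 0 < μ) (hlam : 0 < lam)
    (h1 : 0 < 1 - 2 * μ * lam) (h2 : 1 - 2 * μ * lam < 1)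
    (W : ℝ) (hW : 0 ≤ W) (α : Fin N → ℝ) (hα : ∀ n, 0 ≤ α n) (m : Fin N) :
    MonotoneOn
      (fun s : ℝ =>
        (1 / (1 - s ^ N * (1 - 2 * μ * lam) ^ N) - 1) *
            (∑ n : Fin N, (α n + s ^ N * (s - 1) * (1 - 2 * μ * lam) * W)) +
          (α m + s ^ N * (s - 1) * (1 - 2 * μ * lam) * W))
      {s : ℝ | 1 ≤ s ∧ s * (1 - 2 * μ * lam) < 1} := by
  set c : ℝ := 1 - 2 * μ * lam with hc
  intro a ha b hb hab
  obtain ⟨ha1, hac⟩ := ha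
  obtain ⟨hb1, hbc⟩ := hb
  have hc0 : 0 < c := h1
  have ha0 : (0:ℝ) ≤ a := le_trans zero_le_one ha1
  have hb0 : (0:ℝ) ≤ b := le_trans zero_le_one hb1
  have hNne : N ≠ 0 := by omega
  have hbcN : b ^ N * c ^ N < 1 := by
    have h := pow_lt_one₀ (mul_nonneg hb0 hc0.le) hbc hNne
    rwa [mul_pow] at h
  have hpowab : a ^ N ≤ b ^ N := pow_le_pow_left₀ ha0 hab N
  have hcN : (0:ℝ) ≤ c ^ N := pow_nonneg hc0.le N
  have hacN : a ^ N * c ^ N ≤ b ^ N * c ^ N :=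
    mul_le_mul_of_nonneg_right hpowab hcN
  have hbpos : 0 < 1 - b ^ N * c ^ N := by linarith
  have hapos : 0 < 1 - a ^ N * c ^ N := by linarith
  have hfab : 1 / (1 - a ^ N * c ^ N) ≤ 1 / (1 - b ^ N * c ^ N) :=
    one_div_le_one_div_of_le hbpos (by linarith)
  have haN0 : (0:ℝ) ≤ a ^ N := pow_nonneg ha0 N
  have haNcN0 : (0:ℝ) ≤ a ^ N * c ^ N := mul_nonneg haN0 hcN
  have hfb0 : 0 ≤ 1 / (1 - b ^ N * c ^ N) - 1 := by
    have hbNcN0 : (0:ℝ) ≤ b ^ N * c ^ N := mul_nonneg (pow_nonneg hb0 N) hcN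
    have : (1:ℝ) ≤ 1 / (1 - b ^ N * c ^ N) := one_le_one_div hbpos (by linarith)
    linarith
  have hfa0 : 0 ≤ 1 / (1 - a ^ N * c ^ N) - 1 := by
    have : (1:ℝ) ≤ 1 / (1 - a ^ N * c ^ N) := one_le_one_div hapos (by linarith)
    linarith
  -- g values
  have hga0 : 0 ≤ a ^ N * (a - 1) * c * W :=
    mul_nonneg (mul_nonneg (mul_nonneg haN0 (by linarith)) hc0.le) hW
  have hgab : a ^ N * (a - 1) * c * W ≤ b ^ N * (b - 1) * c * W := by
    have h1' : a ^ N * (a - 1) ≤ b ^ N * (b - 1) :=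
      mul_le_mul hpowab (by linarith) (by linarith) (pow_nonneg hb0 N)
    exact mul_le_mul_of_nonneg_right
      (mul_le_mul_of_nonneg_right h1' hc0.le) hW
  have hsum_le : (∑ n : Fin N, (α n + a ^ N * (a - 1) * c * W)) ≤
      ∑ n : Fin N, (α n + b ^ N * (b - 1) * c * W) :=
    Finset.sum_le_sum fun n _ => by linarith
  have hsum0 : 0 ≤ ∑ n : Fin N, (α n + a ^ N * (a - 1) * c * W) :=
    Finset.sum_nonneg fun n _ => by have := hα n; linarith
  have hmul : (1 / (1 - a ^ N * c ^ N) - 1) *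
      (∑ n : Fin N, (α n + a ^ N * (a - 1) * c * W)) ≤
      (1 / (1 - b ^ N * c ^ N) - 1) *
      (∑ n : Fin N, (α n + b ^ N * (b - 1) * c * W)) :=
    mul_le_mul (by linarith) hsum_le hsum0 hfb0
  exact add_le_add hmul (by linarith)
end
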